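/- arXiv:1804.09752 — 2 statements merged into one kernel-verified Lean document; each statement's English description precedes it below -/
import Mathlib

section
/- In the example instance, the point P is an extreme point of the polytope Q: whenever y, z ∈ Q satisfy P = (y+z)/2, then y = z. Equivalently, there is no nonzero direction vector v such that both P + εv and P − εv lie in Q for some ε > 0. -/
open Finset

/-- A point of the LP relaxation: `CY t d h1 h2`, `B t g1 g2`, `DY t d h g`,
with times in `Fin (T+1)`, dike heights in `Fin n`, barrier heights in `Fin m`. -/
structure DikePoint (T n m : ℕ) (D : Type) where
  CY : Fin (T + 1) → D → Fin n → Fin n → ℝ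
  B : Fin (T + 1) → Fin m → Fin m → ℝ
  DY : Fin (T + 1) → D → Fin n → Fin m → ℝ

/-- Membership in the polytope `Q`: box constraints, support only on
nondecreasing height pairs, initial conditions, flow conservation, and the
linking constraints. -/
def memQ {T n m : ℕ} {D : Type} [Fintype D] [NeZero n] [NeZero m]
    (x : DikePoint T n m D) : Prop :=
  (∀ t d h1 h2, x.CY t d h1 h2 ∈ Set.Icc (0 : ℝ) 1) ∧
  (∀ t g1 g2, x.B t g1 g2 ∈ Set.Icc (0 : ℝ) 1) ∧
  (∀ t d h g, x.DY t d h g ∈ Set.Icc (0 : ℝ) 1) ∧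
  (∀ t d h1 h2, ¬ h1 ≤ h2 → x.CY t d h1 h2 = 0) ∧
  (∀ t g1 g2, ¬ g1 ≤ g2 → x.B t g1 g2 = 0) ∧
  (∀ d, x.CY 0 d 0 0 = 1) ∧
  (∀ d h1 h2, 0 < h2 → x.CY 0 d h1 h2 = 0) ∧
  (x.B 0 0 0 = 1) ∧
  (∀ g1 g2, 0 < g2 → x.B 0 g1 g2 = 0) ∧
  (∀ (t : Fin T) (d : D) (h : Fin n),
    ∑ h1 ∈ Iic h, x.CY t.castSucc d h1 h = ∑ h3 ∈ Ici h, x.CY t.succ d h h3) ∧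
  (∀ t d (h : Fin n), ∑ h1 ∈ Iic h, x.CY t d h1 h = ∑ g : Fin m, x.DY t d h g) ∧
  (∀ (t : Fin T) (g : Fin m),
    ∑ g1 ∈ Iic g, x.B t.castSucc g1 g = ∑ g3 ∈ Ici g, x.B t.succ g g3) ∧
  (∀ t (d : D) (g : Fin m), ∑ g1 ∈ Iic g, x.B t g1 g = ∑ h : Fin n, x.DY t d h g)

/-- A point is integral if every coordinate is `0` or `1`. -/
def isIntegral {T n m : ℕ} {D : Type} (x : DikePoint T n m D) : Prop :=
  (∀ t d h1 h2, x.CY t d h1 h2 = 0 ∨ x.CY t d h1 h2 = 1) ∧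
  (∀ t g1 g2, x.B t g1 g2 = 0 ∨ x.B t g1 g2 = 1) ∧
  (∀ t d h g, x.DY t d h g = 0 ∨ x.DY t d h g = 1)

/-- The linear objective function of the LP relaxation. -/
def obj {T n m : ℕ} {D : Type} [Fintype D]
    (Dcost : Fin (T + 1) → D → Fin n → Fin n → ℝ)
    (Dexp : Fin (T + 1) → D → Fin n → Fin m → ℝ)
    (Bcost : Fin (T + 1) → Fin m → Fin m → ℝ)
    (Bexp : Fin (T + 1) → Fin m → ℝ)
    (x : DikePoint T n m D) : ℝ :=
  (∑ t, ∑ d, ∑ h2, ∑ h1 ∈ Iic h2, Dcost t d h1 h2 * x.CY t d h1 h2) +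
  (∑ t, ∑ d, ∑ h, ∑ g, Dexp t d h g * x.DY t d h g) +
  (∑ t, ∑ g2, ∑ g1 ∈ Iic g2, (Bcost t g1 g2 + Bexp t g2) * x.B t g1 g2)

/-- Condition (i). -/
def condI {T n m : ℕ} {D : Type}
    (Dexp : Fin (T + 1) → D → Fin n → Fin m → ℝ) : Prop :=
  ∀ (t : Fin (T + 1)) (d : D) (h h' : Fin n) (g g' : Fin m), h ≤ h' → g ≤ g' →
    Dexp t d h g + Dexp t d h' g' ≤ Dexp t d h' g + Dexp t d h g'

/-- Condition (ii). -/
def condII {T m : ℕ}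
    (Bcost : Fin (T + 1) → Fin m → Fin m → ℝ) : Prop :=
  ∀ (t : Fin (T + 1)) (g1 g1' g2 g2' : Fin m), g1 ≤ g1' → g1' ≤ g2 → g2 ≤ g2' →
    Bcost t g1 g2 + Bcost t g1' g2' ≤ Bcost t g1 g2' + Bcost t g1' g2

/-- Condition (iii). -/
def condIII {T n : ℕ} {D : Type}
    (Dcost : Fin (T + 1) → D → Fin n → Fin n → ℝ) : Prop :=
  ∀ (t : Fin (T + 1)) (d : D) (h1 h1' h2 h2' : Fin n), h1 ≤ h1' → h1' ≤ h2 → h2 ≤ h2' →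
    Dcost t d h1 h2 + Dcost t d h1' h2' ≤ Dcost t d h1 h2' + Dcost t d h1' h2

/-- The example point `P` (example instance: `T = 2`, one dike segment,
two dike heights, two barrier heights). -/
noncomputable def P : DikePoint 2 2 2 Unit where
  CY := fun t _ h1 h2 =>
    if t = 0 then (if h1 = 0 ∧ h2 = 0 then 1 else 0)
    else if t = 1 then (if h1 = 0 then 1 / 2 else 0)
    else (if h1 = h2 then 1 / 2 else 0)
  B := fun t g1 g2 =>
    if t = 0 then (if g1 = 0 ∧ g2 = 0 then 1 else 0)
    else if t = 1 then (if g1 = 0 then 1 / 2 else 0)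
    else (if g1 = g2 then 1 / 2 else 0)
  DY := fun t _ h g =>
    if t = 0 then (if h = 0 ∧ g = 0 then 1 else 0)
    else if t = 1 then (if h ≠ g then 1 / 2 else 0)
    else (if h = g then 1 / 2 else 0)


/-!
The support of `P` leaves so few free coordinates that the constraints of `Q` pin them down:
writing `a = CY(1,0,0)`, `p = B(1,0,0)`, `q = B(1,0,1)`, the antidiagonal `DY` at time 1
forces `a = q`, the diagonal `DY` at time 2 forces `a = p`, and `p + q = 1`; hence `P` is the
only point of `Q` supported inside the support of `P`. If `P = (y + z) / 2` with `y, z ∈ Q`,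
nonnegativity puts the supports of `y` and `z` inside that of `P`, so `y = P = z`.
-/

attribute [ext] DikePoint

@[simp] lemma Fin.Iic_zero {n : ℕ} : Iic (0 : Fin (n + 1)) = {0} := Iic_bot

@[simp] lemma Fin.Ici_zero {n : ℕ} : Ici (0 : Fin (n + 1)) = univ := Ici_bot

@[simp] lemma Fin.Iic_one_eq_univ : Iic (1 : Fin 2) = univ := by decide

@[simp] lemma Fin.Ici_one_eq_singleton : Ici (1 : Fin 2) = {1} := by decide

namespace DikePoint

variable {T n m : ℕ} {D : Type}

def SupportedBy (x p : DikePoint T n m D) : Prop :=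
  (∀ t d h1 h2, p.CY t d h1 h2 = 0 → x.CY t d h1 h2 = 0) ∧
  (∀ t g1 g2, p.B t g1 g2 = 0 → x.B t g1 g2 = 0) ∧
  (∀ t d h g, p.DY t d h g = 0 → x.DY t d h g = 0)

def IsMidpoint (p y z : DikePoint T n m D) : Prop :=
  (∀ t d h1 h2, p.CY t d h1 h2 = (y.CY t d h1 h2 + z.CY t d h1 h2) / 2) ∧
  (∀ t g1 g2, p.B t g1 g2 = (y.B t g1 g2 + z.B t g1 g2) / 2) ∧
  (∀ t d h g, p.DY t d h g = (y.DY t d h g + z.DY t d h g) / 2)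

theorem IsMidpoint.symm {p y z : DikePoint T n m D} (h : IsMidpoint p y z) :
    IsMidpoint p z y := by
  obtain ⟨hC, hB, hD⟩ := h
  exact ⟨fun t d h1 h2 => by rw [hC, add_comm], fun t g1 g2 => by rw [hB, add_comm],
    fun t d h g => by rw [hD, add_comm]⟩

theorem supportedBy_of_isMidpoint [Fintype D] [NeZero n] [NeZero m]
    {p y z : DikePoint T n m D} (hy : memQ y) (hz : memQ z) (h : IsMidpoint p y z) :
    y.SupportedBy p := by
  obtain ⟨hyC, hyB, hyD, -⟩ := hy
  obtain ⟨hzC, hzB, hzD, -⟩ := hz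
  obtain ⟨hC, hB, hD⟩ := h
  refine ⟨fun t d h1 h2 h0 => ?_, fun t g1 g2 h0 => ?_, fun t d h g h0 => ?_⟩
  · linarith [hC t d h1 h2, (hyC t d h1 h2).1, (hzC t d h1 h2).1]
  · linarith [hB t g1 g2, (hyB t g1 g2).1, (hzB t g1 g2).1]
  · linarith [hD t d h g, (hyD t d h g).1, (hzD t d h g).1]

end DikePoint

open DikePoint

theorem eq_P_of_memQ_of_supportedBy {x : DikePoint 2 2 2 Unit} (hx : memQ x)
    (hs : x.SupportedBy P) : x = P := by
  obtain ⟨-, -, -, -, -, hCY₀, -, hB₀, -, hflowC, hlinkC, hflowB, hlinkB⟩ := hx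
  simp [SupportedBy, P, Fin.forall_fin_succ] at hs
  have flowC₀ : x.CY 1 () 0 0 + x.CY 1 () 0 1 = 1 := by
    simpa [hCY₀] using (hflowC 0 () 0).symm
  have flowC₁₀ : x.CY 2 () 0 0 = x.CY 1 () 0 0 := by simpa [hs] using (hflowC 1 () 0).symm
  have flowC₁₁ : x.CY 2 () 1 1 = x.CY 1 () 0 1 := by
    simpa [Fin.sum_univ_two, hs] using (hflowC 1 () 1).symm
  have flowB₀ : x.B 1 0 0 + x.B 1 0 1 = 1 := by simpa [hB₀] using (hflowB 0 0).symm
  have flowB₁₀ : x.B 2 0 0 = x.B 1 0 0 := by simpa [hs] using (hflowB 1 0).symm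
  have flowB₁₁ : x.B 2 1 1 = x.B 1 0 1 := by
    simpa [Fin.sum_univ_two, hs] using (hflowB 1 1).symm
  have linkC₀ : x.DY 0 () 0 0 = 1 := by simpa [hCY₀, hs] using (hlinkC 0 () 0).symm
  have linkC₁₀ : x.DY 1 () 0 1 = x.CY 1 () 0 0 := by simpa [hs] using (hlinkC 1 () 0).symm
  have linkC₁₁ : x.DY 1 () 1 0 = x.CY 1 () 0 1 := by
    simpa [Fin.sum_univ_two, hs] using (hlinkC 1 () 1).symm
  have linkC₂₀ : x.DY 2 () 0 0 = x.CY 2 () 0 0 := by simpa [hs] using (hlinkC 2 () 0).symm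
  have linkC₂₁ : x.DY 2 () 1 1 = x.CY 2 () 1 1 := by
    simpa [Fin.sum_univ_two, hs] using (hlinkC 2 () 1).symm
  have linkB₁₀ : x.DY 1 () 1 0 = x.B 1 0 0 := by simpa [hs] using (hlinkB 1 () 0).symm
  have linkB₁₁ : x.DY 1 () 0 1 = x.B 1 0 1 := by
    simpa [Fin.sum_univ_two, hs] using (hlinkB 1 () 1).symm
  have linkB₂₀ : x.DY 2 () 0 0 = x.B 2 0 0 := by simpa [hs] using (hlinkB 2 () 0).symm
  have half : x.CY 1 () 0 0 = 1 / 2 := by linarith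
  apply DikePoint.ext
  · ext t ⟨⟩ h1 h2
    fin_cases t <;> fin_cases h1 <;> fin_cases h2 <;> simp [P, hs, hCY₀] <;> linarith
  · ext t g1 g2
    fin_cases t <;> fin_cases g1 <;> fin_cases g2 <;> simp [P, hs, hB₀] <;> linarith
  · ext t ⟨⟩ h g
    fin_cases t <;> fin_cases h <;> fin_cases g <;> simp [P, hs] <;> linarith

/-- `P` is an extreme point of the polytope `Q`: whenever
`y, z ∈ Q` satisfy `P = (y + z) / 2` (coordinatewise), then `y = z`. -/
theorem statement_1 :
    ∀ y z : DikePoint 2 2 2 Unit, memQ y → memQ z →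
      ((∀ t d h1 h2, P.CY t d h1 h2 = (y.CY t d h1 h2 + z.CY t d h1 h2) / 2) ∧
       (∀ t g1 g2, P.B t g1 g2 = (y.B t g1 g2 + z.B t g1 g2) / 2) ∧
       (∀ t d h g, P.DY t d h g = (y.DY t d h g + z.DY t d h g) / 2)) →
      y = z := by
  rintro y z hy hz (hmid : IsMidpoint P y z)
  rw [eq_P_of_memQ_of_supportedBy hy (supportedBy_of_isMidpoint hy hz hmid),
    eq_P_of_memQ_of_supportedBy hz (supportedBy_of_isMidpoint hz hy hmid.symm)]
end

section
/- (Equivalence of the IP model and the height-profile reformulation.) The minimum of obj(x) over all integral points x of the polytope Q equals the minimum of the profile cost over all pairs consisting of a barrier height profile hb and a family of dike height profiles (hd)_{d∈D}. Both minima are over nonempty finite sets and hence attained. -/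
open Finset

/-- The value of a height profile at the previous time step, with value `z`
at "time −1" (i.e. when `t = 0`). -/
def prevH {k : ℕ} {α : Type} (f : Fin (k + 1) → α) (z : α) (t : Fin (k + 1)) : α :=
  if (t : ℕ) = 0 then z else f ⟨(t : ℕ) - 1, by have := t.isLt; omega⟩

/-- The total cost of a family of dike height profiles `hd` together with a
barrier height profile `hb` (profiles extended by value `0` at time `−1`). -/
noncomputable def profileCost {T n m : ℕ} {D : Type} [Fintype D] [NeZero n] [NeZero m]
    (Dcost : Fin (T + 1) → D → Fin n → Fin n → ℝ)
    (Dexp : Fin (T + 1) → D → Fin n → Fin m → ℝ)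
    (Bcost : Fin (T + 1) → Fin m → Fin m → ℝ)
    (Bexp : Fin (T + 1) → Fin m → ℝ)
    (hd : D → Fin (T + 1) → Fin n) (hb : Fin (T + 1) → Fin m) : ℝ :=
  ∑ t, (Bcost t (prevH hb 0 t) (hb t) + Bexp t (hb t) +
    ∑ d, (Dcost t d (prevH (hd d) 0 t) (hd d t) + Dexp t d (hd d t) (hb t)))

/-- The 0-1 point of the polytope associated with a family of dike height
profiles and a barrier height profile. -/
noncomputable def profilePoint {T n m : ℕ} {D : Type} [NeZero n] [NeZero m]
    (hd : D → Fin (T + 1) → Fin n) (hb : Fin (T + 1) → Fin m) :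
    DikePoint T n m D where
  CY := fun t d h1 h2 => if h1 = prevH (hd d) 0 t ∧ h2 = hd d t then 1 else 0
  B := fun t g1 g2 => if g1 = prevH hb 0 t ∧ g2 = hb t then 1 else 0
  DY := fun t d h g => if h = hd d t ∧ g = hb t then 1 else 0

/-! An integral point of `Q` is the 0-1 encoding of a family of height profiles. Integrality
and flow conservation force a single active transition `(h, h')` at each time, for each dike
segment and for the barrier, each one starting at the height where the previous one ended;
the linking constraints then force `DY` to select the current pair of heights. On these
encodings the objective is the profile cost, so both problems minimize the same function over
the same finite nonempty set of profiles. -/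

section IndicatorSums

variable {α R : Type*} [LinearOrder α] [AddCommMonoidWithOne R] {a b : α}

lemma sum_Iic_ite_and [LocallyFiniteOrderBot α] (hab : a ≤ b) (h : α) :
    ∑ x ∈ Iic h, (if x = a ∧ h = b then (1 : R) else 0) = if h = b then 1 else 0 := by
  split_ifs with hb
  · subst hb; simp [hab]
  · simp [hb]

lemma sum_Ici_ite_and [LocallyFiniteOrderTop α] (hab : a ≤ b) (h : α) :
    ∑ x ∈ Ici h, (if h = a ∧ x = b then (1 : R) else 0) = if h = a then 1 else 0 := by
  split_ifs with ha
  · subst ha; simp [hab]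
  · simp [ha]

end IndicatorSums

section ZeroOne

variable {α β : Type*} [Fintype β] [DecidableEq β]

lemma exists_eq_ite_of_sum_eq_one {f : β → ℝ} (h01 : ∀ b, f b = 0 ∨ f b = 1)
    (hsum : ∑ b, f b = 1) : ∃ b₀, ∀ b, f b = if b = b₀ then 1 else 0 := by
  obtain ⟨b₀, -, hb₀⟩ := Finset.exists_ne_zero_of_sum_ne_zero (hsum ▸ one_ne_zero)
  have hf₀ : f b₀ = 1 := (h01 b₀).resolve_left hb₀
  have hrest : ∑ b ∈ univ.erase b₀, f b = 0 := by
    linarith [Finset.add_sum_erase univ f (mem_univ b₀)]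
  refine ⟨b₀, fun b => ?_⟩
  split_ifs with hb
  · rw [hb, hf₀]
  · refine (sum_eq_zero_iff_of_nonneg fun x _ => ?_).1 hrest b (mem_erase.2 ⟨hb, mem_univ b⟩)
    rcases h01 x with hx | hx <;> simp [hx]

lemma exists_eq_ite_and_of_row_sums [DecidableEq α] {M : α → β → ℝ} {a₀ : α}
    (h01 : ∀ a b, M a b = 0 ∨ M a b = 1)
    (hrow : ∀ a, ∑ b, M a b = if a = a₀ then 1 else 0) :
    ∃ b₀, ∀ a b, M a b = if a = a₀ ∧ b = b₀ then 1 else 0 := by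
  obtain ⟨b₀, hb₀⟩ := exists_eq_ite_of_sum_eq_one (h01 a₀) (by simp [hrow])
  refine ⟨b₀, fun a b => ?_⟩
  by_cases ha : a = a₀
  · simp [ha, hb₀]
  · have hnonneg : ∀ b ∈ univ, 0 ≤ M a b := fun b _ => by
      rcases h01 a b with h | h <;> simp [h]
    simpa [ha] using (sum_eq_zero_iff_of_nonneg hnonneg).1 (by simp [hrow, ha]) b (mem_univ b)

end ZeroOne

def IsHeightProfile {T k : ℕ} [NeZero k] (f : Fin (T + 1) → Fin k) : Prop :=
  Monotone f ∧ f 0 = 0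

section HeightProfile

variable {T k : ℕ}

@[simp]
lemma prevH_zero {α : Type} (f : Fin (T + 1) → α) (z : α) : prevH f z 0 = z := by
  simp [prevH]

@[simp]
lemma prevH_succ {α : Type} (f : Fin (T + 1) → α) (z : α) (s : Fin T) :
    prevH f z s.succ = f s.castSucc := by
  rw [prevH, if_neg (Fin.val_ne_zero_iff.2 s.succ_ne_zero)]
  rfl

variable [NeZero k]

lemma IsHeightProfile.prevH_le {f : Fin (T + 1) → Fin k} (hf : IsHeightProfile f)
    (t : Fin (T + 1)) : prevH f 0 t ≤ f t := by
  cases t using Fin.cases with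
  | zero => simp [hf.2]
  | succ s => simpa using hf.1 s.castSucc_le_succ

lemma exists_eq_ite_and_of_integral_flow {c : Fin (T + 1) → Fin k → Fin k → ℝ}
    (h01 : ∀ t h1 h2, c t h1 h2 = 0 ∨ c t h1 h2 = 1)
    (hsupp : ∀ t h1 h2, ¬ h1 ≤ h2 → c t h1 h2 = 0)
    (hinit : c 0 0 0 = 1) (hinit0 : ∀ h1 h2, 0 < h2 → c 0 h1 h2 = 0)
    (hflow : ∀ (t : Fin T) (h : Fin k),
      ∑ h1 ∈ Iic h, c t.castSucc h1 h = ∑ h3 ∈ Ici h, c t.succ h h3) (t : Fin (T + 1)) :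
    ∃ a b, a ≤ b ∧ ∀ h1 h2, c t h1 h2 = if h1 = a ∧ h2 = b then 1 else 0 := by
  have hrow : ∀ t h, ∑ h3 ∈ Ici h, c t h h3 = ∑ h3, c t h h3 := fun t h =>
    sum_subset (subset_univ _) fun h3 _ hh3 => hsupp t h h3 (by simpa using hh3)
  induction t using Fin.induction with
  | zero =>
    refine ⟨0, 0, le_rfl, fun h1 h2 => ?_⟩
    rcases (Fin.zero_le h2).eq_or_lt with rfl | hpos
    · rcases (Fin.zero_le h1).eq_or_lt with rfl | hpos1
      · simpa using hinit
      · simp [hpos1.ne', hsupp 0 h1 0 (not_le.2 hpos1)]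
    · simp [hpos.ne', hinit0 h1 h2 hpos]
  | succ s ih =>
    obtain ⟨a, b, hab, hc⟩ := ih
    obtain ⟨b', hc'⟩ := exists_eq_ite_and_of_row_sums (h01 s.succ) (a₀ := b) fun h => by
      rw [← hrow, ← hflow]
      simp only [hc, sum_Iic_ite_and hab]
    refine ⟨b, b', ?_, hc'⟩
    by_contra hlt
    simpa [hsupp _ _ _ hlt] using hc' b b'

lemma exists_isHeightProfile_of_integral_flow {c : Fin (T + 1) → Fin k → Fin k → ℝ}
    (h01 : ∀ t h1 h2, c t h1 h2 = 0 ∨ c t h1 h2 = 1)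
    (hsupp : ∀ t h1 h2, ¬ h1 ≤ h2 → c t h1 h2 = 0)
    (hinit : c 0 0 0 = 1) (hinit0 : ∀ h1 h2, 0 < h2 → c 0 h1 h2 = 0)
    (hflow : ∀ (t : Fin T) (h : Fin k),
      ∑ h1 ∈ Iic h, c t.castSucc h1 h = ∑ h3 ∈ Ici h, c t.succ h h3) :
    ∃ f : Fin (T + 1) → Fin k, IsHeightProfile f ∧
      ∀ t h1 h2, c t h1 h2 = if h1 = prevH f 0 t ∧ h2 = f t then 1 else 0 := by
  choose a b hab hc using exists_eq_ite_and_of_integral_flow h01 hsupp hinit hinit0 hflow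
  have hlink : ∀ s : Fin T, a s.succ = b s.castSucc := by
    intro s
    have := hflow s (a s.succ)
    simp only [hc, sum_Iic_ite_and (hab _)] at this
    simpa [hab] using this
  have h0 : a 0 = 0 ∧ b 0 = 0 := by
    have := hc 0 0 0
    rw [hinit] at this
    split_ifs at this with h
    · exact ⟨h.1.symm, h.2.symm⟩
    · norm_num at this
  have hprev : ∀ t, prevH b 0 t = a t := by
    intro t
    cases t using Fin.cases with
    | zero => simp [h0.1]
    | succ s => simp [hlink]
  refine ⟨b, ⟨Fin.monotone_iff_le_succ.2 fun s => ?_, h0.2⟩,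
    fun t => by simpa only [hprev] using hc t⟩
  rw [← hlink]
  exact hab _

end HeightProfile

section ProfilePoint

variable {T n m : ℕ} {D : Type} [NeZero n] [NeZero m]

lemma isIntegral_profilePoint (hd : D → Fin (T + 1) → Fin n) (hb : Fin (T + 1) → Fin m) :
    isIntegral (profilePoint hd hb) := by
  refine ⟨?_, ?_, ?_⟩ <;> intros <;> simp only [profilePoint] <;> split_ifs <;> simp

variable [Fintype D]

lemma memQ_profilePoint {hd : D → Fin (T + 1) → Fin n} {hb : Fin (T + 1) → Fin m}
    (hdp : ∀ d, IsHeightProfile (hd d)) (hbp : IsHeightProfile hb) :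
    memQ (profilePoint hd hb) := by
  refine ⟨?_, ?_, ?_, ?_, ?_, ?_, ?_, ?_, ?_, ?_, ?_, ?_, ?_⟩ <;> simp only [profilePoint]
  · intros; split_ifs <;> norm_num
  · intros; split_ifs <;> norm_num
  · intros; split_ifs <;> norm_num
  · rintro t d h1 h2 hlt
    rw [if_neg]; rintro ⟨rfl, rfl⟩; exact hlt ((hdp d).prevH_le t)
  · rintro t g1 g2 hlt
    rw [if_neg]; rintro ⟨rfl, rfl⟩; exact hlt (hbp.prevH_le t)
  · simp [(hdp _).2]
  · intro d h1 h2 hpos; simp [(hdp d).2, hpos.ne']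
  · simp [hbp.2]
  · intro g1 g2 hpos; simp [hbp.2, hpos.ne']
  · intro t d h
    rw [sum_Iic_ite_and ((hdp d).prevH_le _), prevH_succ,
      sum_Ici_ite_and ((hdp d).1 t.castSucc_le_succ)]
  · intro t d h
    rw [sum_Iic_ite_and ((hdp d).prevH_le _)]; simp [ite_and]
  · intro t g
    rw [sum_Iic_ite_and (hbp.prevH_le _), prevH_succ, sum_Ici_ite_and (hbp.1 t.castSucc_le_succ)]
  · intro t d g
    rw [sum_Iic_ite_and (hbp.prevH_le _)]; simp [ite_and]

lemma exists_eq_profilePoint_of_memQ {y : DikePoint T n m D} (hy : memQ y) (hyI : isIntegral y) :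
    ∃ (hd : D → Fin (T + 1) → Fin n) (hb : Fin (T + 1) → Fin m),
      (∀ d, IsHeightProfile (hd d)) ∧ IsHeightProfile hb ∧ y = profilePoint hd hb := by
  obtain ⟨-, -, -, hCYsupp, hBsupp, hCY0, hCYinit, hB0, hBinit,
    hCYflow, hCYlink, hBflow, hBlink⟩ := hy
  obtain ⟨hCY01, hB01, hDY01⟩ := hyI
  obtain ⟨hb, hbp, hB⟩ :=
    exists_isHeightProfile_of_integral_flow hB01 hBsupp hB0 hBinit hBflow
  choose hd hdp hCY using fun d => exists_isHeightProfile_of_integral_flow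
    (c := fun t => y.CY t d) (fun t => hCY01 t d) (fun t => hCYsupp t d) (hCY0 d)
    (hCYinit d) (fun t => hCYflow t d)
  have hDY : ∀ t d h g, y.DY t d h g = if h = hd d t ∧ g = hb t then 1 else 0 := by
    intro t d
    obtain ⟨g₀, hg₀⟩ := exists_eq_ite_and_of_row_sums (hDY01 t d) (a₀ := hd d t) fun h => by
      rw [← hCYlink]
      simp only [hCY, sum_Iic_ite_and ((hdp d).prevH_le t)]
    have hcol := hBlink t d g₀
    simp only [hB, sum_Iic_ite_and (hbp.prevH_le t), hg₀] at hcol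
    obtain rfl : g₀ = hb t := by simpa using hcol
    exact hg₀
  refine ⟨hd, hb, hdp, hbp, ?_⟩
  cases y
  simp only [profilePoint, DikePoint.mk.injEq]
  exact ⟨by funext t d h1 h2; exact hCY d t h1 h2, by funext t g1 g2; exact hB t g1 g2,
    by funext t d h g; exact hDY t d h g⟩

variable (Dcost : Fin (T + 1) → D → Fin n → Fin n → ℝ)
  (Dexp : Fin (T + 1) → D → Fin n → Fin m → ℝ)
  (Bcost : Fin (T + 1) → Fin m → Fin m → ℝ)
  (Bexp : Fin (T + 1) → Fin m → ℝ)

lemma obj_profilePoint {hd : D → Fin (T + 1) → Fin n} {hb : Fin (T + 1) → Fin m}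
    (hdp : ∀ d, IsHeightProfile (hd d)) (hbp : IsHeightProfile hb) :
    obj Dcost Dexp Bcost Bexp (profilePoint hd hb)
      = profileCost Dcost Dexp Bcost Bexp hd hb := by
  have hble := hbp.prevH_le
  have hdle := fun d => (hdp d).prevH_le
  -- putting `h2 = _` first lets the inner sum over `h1 ∈ Iic h2` collapse
  simp only [obj, profileCost, profilePoint, and_comm (a := _ = prevH _ _ _), ite_and, mul_ite,
    mul_one, mul_zero, sum_ite_irrel, sum_ite_eq', mem_Iic, sum_const_zero, mem_univ,
    ↓reduceIte, sum_add_distrib, hble, hdle]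
  ring

lemma exists_profileCost_minimal :
    ∃ (hd : D → Fin (T + 1) → Fin n) (hb : Fin (T + 1) → Fin m),
      (∀ d, IsHeightProfile (hd d)) ∧ IsHeightProfile hb ∧
      ∀ (hd' : D → Fin (T + 1) → Fin n) (hb' : Fin (T + 1) → Fin m),
        (∀ d, IsHeightProfile (hd' d)) → IsHeightProfile hb' →
        profileCost Dcost Dexp Bcost Bexp hd hb ≤ profileCost Dcost Dexp Bcost Bexp hd' hb' := by
  let S : Set ((D → Fin (T + 1) → Fin n) × (Fin (T + 1) → Fin m)) :=
    {p | (∀ d, IsHeightProfile (p.1 d)) ∧ IsHeightProfile p.2}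
  have hS : S.Nonempty :=
    ⟨(fun _ _ => 0, fun _ => 0), fun _ => ⟨monotone_const, rfl⟩, monotone_const, rfl⟩
  obtain ⟨⟨hd, hb⟩, ⟨hdp, hbp⟩, hmin⟩ :=
    S.exists_min_image (fun p => profileCost Dcost Dexp Bcost Bexp p.1 p.2) S.toFinite hS
  exact ⟨hd, hb, hdp, hbp, fun hd' hb' hdp' hbp' => hmin (hd', hb') ⟨hdp', hbp'⟩⟩

end ProfilePoint

theorem statement_12_general (T n m : ℕ) [NeZero n] [NeZero m]
    (D : Type) [Fintype D]
    (Dcost : Fin (T + 1) → D → Fin n → Fin n → ℝ)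
    (Dexp : Fin (T + 1) → D → Fin n → Fin m → ℝ)
    (Bcost : Fin (T + 1) → Fin m → Fin m → ℝ)
    (Bexp : Fin (T + 1) → Fin m → ℝ) :
    ∃ (x : DikePoint T n m D) (hb : Fin (T + 1) → Fin m)
      (hd : D → Fin (T + 1) → Fin n),
      memQ x ∧ isIntegral x ∧
      Monotone hb ∧ hb 0 = 0 ∧ (∀ d, Monotone (hd d) ∧ hd d 0 = 0) ∧
      (∀ y : DikePoint T n m D, memQ y → isIntegral y →
        obj Dcost Dexp Bcost Bexp x ≤ obj Dcost Dexp Bcost Bexp y) ∧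
      (∀ (hb' : Fin (T + 1) → Fin m) (hd' : D → Fin (T + 1) → Fin n),
        Monotone hb' → hb' 0 = 0 → (∀ d, Monotone (hd' d) ∧ hd' d 0 = 0) →
        profileCost Dcost Dexp Bcost Bexp hd hb ≤
          profileCost Dcost Dexp Bcost Bexp hd' hb') ∧
      obj Dcost Dexp Bcost Bexp x = profileCost Dcost Dexp Bcost Bexp hd hb := by
  obtain ⟨hd, hb, hdp, hbp, hmin⟩ := exists_profileCost_minimal Dcost Dexp Bcost Bexp
  have hobj := obj_profilePoint Dcost Dexp Bcost Bexp hdp hbp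
  refine ⟨profilePoint hd hb, hb, hd, memQ_profilePoint hdp hbp, isIntegral_profilePoint hd hb,
    hbp.1, hbp.2, hdp, fun y hy hyI => ?_,
    fun hb' hd' hbm hb0 hdp' => hmin hd' hb' hdp' ⟨hbm, hb0⟩, hobj⟩
  obtain ⟨hd', hb', hdp', hbp', rfl⟩ := exists_eq_profilePoint_of_memQ hy hyI
  rw [hobj, obj_profilePoint Dcost Dexp Bcost Bexp hdp' hbp']
  exact hmin hd' hb' hdp' hbp'

/-- equivalence of the IP model and the height-profile
reformulation: both minima are attained, and the minimum of the objective over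
integral points of `Q` equals the minimum of the profile cost over all pairs of
a barrier height profile and a family of dike height profiles. -/
theorem statement_12 (T n m : ℕ) (hT : 1 ≤ T) [NeZero n] [NeZero m]
    (D : Type) [Fintype D] [Nonempty D]
    (Dcost : Fin (T + 1) → D → Fin n → Fin n → ℝ)
    (Dexp : Fin (T + 1) → D → Fin n → Fin m → ℝ)
    (Bcost : Fin (T + 1) → Fin m → Fin m → ℝ)
    (Bexp : Fin (T + 1) → Fin m → ℝ)
    (hDcost : ∀ t d h1 h2, h1 ≤ h2 → 0 ≤ Dcost t d h1 h2)
    (hDexp : ∀ t d h g, 0 ≤ Dexp t d h g)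
    (hBcost : ∀ t g1 g2, g1 ≤ g2 → 0 ≤ Bcost t g1 g2)
    (hBexp : ∀ t g, 0 ≤ Bexp t g) :
    ∃ (x : DikePoint T n m D) (hb : Fin (T + 1) → Fin m)
      (hd : D → Fin (T + 1) → Fin n),
      memQ x ∧ isIntegral x ∧
      Monotone hb ∧ hb 0 = 0 ∧ (∀ d, Monotone (hd d) ∧ hd d 0 = 0) ∧
      (∀ y : DikePoint T n m D, memQ y → isIntegral y →
        obj Dcost Dexp Bcost Bexp x ≤ obj Dcost Dexp Bcost Bexp y) ∧
      (∀ (hb' : Fin (T + 1) → Fin m) (hd' : D → Fin (T + 1) → Fin n),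
        Monotone hb' → hb' 0 = 0 → (∀ d, Monotone (hd' d) ∧ hd' d 0 = 0) →
        profileCost Dcost Dexp Bcost Bexp hd hb ≤
          profileCost Dcost Dexp Bcost Bexp hd' hb') ∧
      obj Dcost Dexp Bcost Bexp x = profileCost Dcost Dexp Bcost Bexp hd hb :=
  statement_12_general T n m D Dcost Dexp Bcost Bexp
end
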